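/- arXiv:1602.01770 — 6 statements merged into one kernel-verified Lean document; each statement's English description precedes it below -/
import Mathlib

section
/- Let e be an edge of smallest cardinality ρ in a hypergraph H, and let v be a vertex in V \ e. If every edge of cardinality ρ containing v also contains another vertex of V \ e, then v is free with respect to e and the versal (V \ e) \ {v}; i.e., (V \ e) \ {v} is a versal for e and v ∉ ((V \ e) \ {v}) ∪ e. -/
/-- Let `e` be an edge of smallest cardinality `ρ` and `v ∈ V \ e`. If every edge of
cardinality `ρ` containing `v` also contains another vertex of `V \ e`, then
`(V \ e) \ {v}` is a versal for `e` and `v` is free with respect to it. -/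
theorem stmt_4 {V : Type*} [Fintype V] [DecidableEq V] (E : Finset (Finset V)) (ρ : ℕ)
    (hanti : ∀ e ∈ E, ∀ f ∈ E, e ⊆ f → e = f)
    (e : Finset V) (he : e ∈ E) (hρ : e.card = ρ) (hmin : ∀ f ∈ E, ρ ≤ f.card)
    (v : V) (hv : v ∈ eᶜ)
    (h : ∀ f ∈ E, f.card = ρ → v ∈ f → ∃ w ∈ f, w ≠ v ∧ w ∈ eᶜ) :
    (∀ f ∈ E, f ≠ e →
        e.card + ((eᶜ \ {v}) ∩ e).card < f.card + ((eᶜ \ {v}) ∩ f).card) ∧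
      v ∉ (eᶜ \ {v}) ∪ e := by
  have hve : v ∉ e := Finset.mem_compl.mp hv
  constructor
  · intro f hf hfe
    have hSe : (eᶜ \ {v}) ∩ e = ∅ := by
      ext x
      simp only [Finset.mem_inter, Finset.mem_sdiff, Finset.mem_compl,
        Finset.notMem_empty, iff_false]
      tauto
    rw [hSe, Finset.card_empty, add_zero, hρ]
    rcases lt_or_eq_of_le (hmin f hf) with hlt | heq
    · exact lt_of_lt_of_le hlt (Nat.le_add_right _ _)
    · -- f.card = ρ; need 1 ≤ |S ∩ f|
      have hfsub : ¬ f ⊆ e := fun hsub => hfe (hanti f hf e he hsub)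
      obtain ⟨w, hwf, hwe⟩ := Finset.not_subset.mp hfsub
      have : ∃ w ∈ f, w ≠ v ∧ w ∉ e := by
        by_cases hwv : w = v
        · obtain ⟨w', hw'f, hw'v, hw'e⟩ := h f hf heq.symm (hwv ▸ hwf)
          exact ⟨w', hw'f, hw'v, Finset.mem_compl.mp hw'e⟩
        · exact ⟨w, hwf, hwv, hwe⟩
      obtain ⟨w', hw'f, hw'v, hw'e⟩ := this
      have hmem : w' ∈ (eᶜ \ {v}) ∩ f := by
        simp only [Finset.mem_inter, Finset.mem_sdiff, Finset.mem_compl,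
          Finset.mem_singleton]
        exact ⟨⟨hw'e, hw'v⟩, hw'f⟩
      have : 0 < ((eᶜ \ {v}) ∩ f).card := Finset.card_pos.mpr ⟨w', hmem⟩
      omega
  · simp [hve]
end

section
/- Let H be a hypergraph with edges e, f, and an edge g of smallest cardinality ρ, and a vertex u ∈ f such that u lies in no edge other than f and f \ {u} ⊆ e. If |f ∩ g| < ρ − 1, then there exists a free vertex with respect to g; in fact u is free with respect to g and the versal (V \ g) \ {u}. -/
/-- Lemma 4: if `H` has edges `e`, `f` and an edge `g` of smallest cardinality `ρ`, and a
vertex `u ∈ f` of degree 1 with `f \ {u} ⊆ e`, and `|f ∩ g| < ρ - 1`, then `u` is free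
with respect to `g` and the versal `(V \ g) \ {u}`. -/
theorem stmt_5 {V : Type*} [Fintype V] [DecidableEq V] (E : Finset (Finset V)) (ρ : ℕ)
    (hanti : ∀ e ∈ E, ∀ f ∈ E, e ⊆ f → e = f)
    (e f g : Finset V) (he : e ∈ E) (hf : f ∈ E) (hg : g ∈ E)
    (hρ : g.card = ρ) (hmin : ∀ h ∈ E, ρ ≤ h.card)
    (u : V) (hu : u ∈ f) (hdeg : ∀ h ∈ E, u ∈ h → h = f)
    (hfe : f \ {u} ⊆ e) (hfg : (f ∩ g).card < ρ - 1) :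
    (∀ h ∈ E, h ≠ g →
        g.card + ((gᶜ \ {u}) ∩ g).card < h.card + ((gᶜ \ {u}) ∩ h).card) ∧
      u ∉ (gᶜ \ {u}) ∪ g := by
  have hug : u ∉ g := by
    intro hmem
    have hgf := hdeg g hg hmem
    rw [hgf, Finset.inter_self] at hfg
    have : ρ ≤ f.card := hmin f hf
    rw [hgf] at hρ
    omega
  refine ⟨?_, ?_⟩
  · intro h hh hne
    obtain ⟨v, hvh, hvg, hvu⟩ : ∃ v, v ∈ h ∧ v ∉ g ∧ v ≠ u := by
      by_cases hhf : h = f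
      · subst hhf
        have hcard : (h ∩ g).card + (h \ g).card = h.card :=
          Finset.card_inter_add_card_sdiff h g
        have h1 : 1 < (h \ g).card := by
          have := hmin h hh; omega
        obtain ⟨v, hv, hvu⟩ := Finset.exists_mem_ne h1 u
        exact ⟨v, (Finset.mem_sdiff.mp hv).1, (Finset.mem_sdiff.mp hv).2, hvu⟩
      · have huh : u ∉ h := fun hm => hhf (hdeg h hh hm)
        have hns : ¬ h ⊆ g := fun hs => hne (hanti h hh g hg hs)
        obtain ⟨v, hvh, hvg⟩ := Finset.not_subset.mp hns
        exact ⟨v, hvh, hvg, fun hv => huh (hv ▸ hvh)⟩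
    have hSg : ((gᶜ \ {u}) ∩ g) = ∅ := by
      ext x; simp; tauto
    have hSh : 0 < ((gᶜ \ {u}) ∩ h).card :=
      Finset.card_pos.mpr ⟨v, by simp [hvg, hvu, hvh]⟩
    have := hmin h hh
    rw [hSg]
    simp only [Finset.card_empty]
    omega
  · simp [hug]
end

section
/- Let F be an r-uniform hypergraph on n ≥ 2r vertices with exactly n − r + 1 edges in which two distinct edges e and f are both poles of flags. Then F is an (n−r+1)-star, i.e., all edges share a common core of r − 1 vertices. -/
/-- Lemma 5: an `r`-uniform hypergraph on `n ≥ 2r` vertices with `n - r + 1` edges in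
which two distinct edges are both poles of flags is an `(n - r + 1)`-star: all edges
share a common core of `r - 1` vertices. -/
theorem stmt_7 {V : Type*} [Fintype V] [DecidableEq V] (E : Finset (Finset V)) (r n : ℕ)
    (hn : n = Fintype.card V) (hunif : ∀ e ∈ E, e.card = r)
    (hnr : 2 * r ≤ n) (hm : E.card = n - r + 1)
    (e f : Finset V) (he : e ∈ E) (hf : f ∈ E) (hef : e ≠ f)
    (hpole_e : ∃ P ⊆ E, e ∉ P ∧ P.card = n - r ∧ ∀ p ∈ P, (p ∩ e).card = r - 1 ∧
      ∀ v ∈ p, v ∉ e → (E.filter (fun h => v ∈ h)).card = 1)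
    (hpole_f : ∃ P ⊆ E, f ∉ P ∧ P.card = n - r ∧ ∀ p ∈ P, (p ∩ f).card = r - 1 ∧
      ∀ v ∈ p, v ∉ f → (E.filter (fun h => v ∈ h)).card = 1) :
    ∃ C : Finset V, C.card = r - 1 ∧ ∀ g ∈ E, C ⊆ g := by
  obtain ⟨Pe, hPeE, hePe, hPec, hPe⟩ := hpole_e
  obtain ⟨Pf, hPfE, hfPf, hPfc, hPf⟩ := hpole_f
  have hPe_eq : Pe = E.erase e := by
    apply Finset.eq_of_subset_of_card_le
    · exact fun x hx => Finset.mem_erase.2 ⟨fun h => hePe (h ▸ hx), hPeE hx⟩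
    · rw [Finset.card_erase_of_mem he, hm, hPec]; omega
  have hPf_eq : Pf = E.erase f := by
    apply Finset.eq_of_subset_of_card_le
    · exact fun x hx => Finset.mem_erase.2 ⟨fun h => hfPf (h ▸ hx), hPfE hx⟩
    · rw [Finset.card_erase_of_mem hf, hm, hPfc]; omega
  have hef_card : (e ∩ f).card = r - 1 :=
    (hPf e (hPf_eq ▸ Finset.mem_erase.2 ⟨hef, he⟩)).1
  refine ⟨e ∩ f, hef_card, ?_⟩
  intro g hg
  by_cases hge : g = e
  · subst hge; exact Finset.inter_subset_left
  by_cases hgf : g = f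
  · subst hgf; exact Finset.inter_subset_right
  obtain ⟨hgf_card, -⟩ := hPf g (hPf_eq ▸ Finset.mem_erase.2 ⟨hgf, hg⟩)
  obtain ⟨-, hdeg⟩ := hPe g (hPe_eq ▸ Finset.mem_erase.2 ⟨hge, hg⟩)
  have hfe : ¬ f ⊆ e := fun h =>
    hef (Finset.eq_of_subset_of_card_le h (by rw [hunif e he, hunif f hf])).symm
  obtain ⟨w, hwf, hwe⟩ := Finset.not_subset.1 hfe
  intro v hv
  by_contra hvg
  have hve : v ∈ e := (Finset.mem_inter.1 hv).1
  have hvf : v ∈ f := (Finset.mem_inter.1 hv).2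
  have hsub : g ∩ f = f.erase v := by
    apply Finset.eq_of_subset_of_card_le
    · intro x hx
      rcases Finset.mem_inter.1 hx with ⟨hxg, hxf⟩
      exact Finset.mem_erase.2 ⟨fun h => hvg (h ▸ hxg), hxf⟩
    · rw [Finset.card_erase_of_mem hvf, hunif f hf, hgf_card]
  have hwg : w ∈ g := by
    have hw : w ∈ f.erase v := Finset.mem_erase.2 ⟨fun h => hwe (h ▸ hve), hwf⟩
    rw [← hsub] at hw
    exact (Finset.mem_inter.1 hw).1
  have h1 := hdeg w hwg hwe
  have h2 : ({f, g} : Finset (Finset V)) ⊆ E.filter (fun h => w ∈ h) := by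
    intro x hx
    rcases Finset.mem_insert.1 hx with h | h
    · subst h; exact Finset.mem_filter.2 ⟨hf, hwf⟩
    · rw [Finset.mem_singleton] at h; subst h; exact Finset.mem_filter.2 ⟨hg, hwg⟩
  have h3 : 2 ≤ (E.filter (fun h => w ∈ h)).card := by
    calc 2 = ({f, g} : Finset (Finset V)).card := by
          rw [Finset.card_insert_of_notMem (by simp [Ne.symm hgf]), Finset.card_singleton]
      _ ≤ _ := Finset.card_le_card h2
  omega
end

section
/- Let H be an r-uniform hypergraph with n > 2r vertices and m ≤ n − r edges, m ≥ 2. Then the number of null versals of H satisfies |Z'(H)| ≥ m · 2^{n − m − r + 1}, and consequently |Z'(H)| ≥ n + 1. -/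
/-!
A set can be a null versal for at most one edge `e`: it avoids `e`, while a null versal for any
other edge meets `e`. So `Z'(H)` is the disjoint union of the families `Z_e` of null versals for
the single edges. By the antichain condition every edge `f ≠ e` has a vertex outside `e`; these
vertices form a null versal `B` for `e` of size at most `m - 1`, and every set between `B` and the
complement of `e` is again one. Hence `|Z_e| ≥ 2 ^ (n - r - (m - 1))` for each of the `m` edges.
With `d = n - r - m`, the second bound follows from `m * 2 ^ (d + 1) ≥ 2 (m + d) = 2 (n - r) > n`.
-/

open Finset

section NullVersal

variable {V : Type*} [Fintype V] [DecidableEq V]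

def IsNullVersal (E : Finset (Finset V)) (e S : Finset V) : Prop :=
  S ⊆ eᶜ ∧ ∀ f ∈ E, f ≠ e → (S ∩ f).Nonempty

instance (E : Finset (Finset V)) (e : Finset V) : DecidablePred (IsNullVersal E e) :=
  fun _ => inferInstanceAs (Decidable (_ ∧ _))

def nullVersals (E : Finset (Finset V)) (e : Finset V) : Finset (Finset V) :=
  univ.filter (IsNullVersal E e)

variable {E : Finset (Finset V)} {e S : Finset V}

theorem mem_nullVersals : S ∈ nullVersals E e ↔ IsNullVersal E e S := by
  simp [nullVersals]

theorem IsNullVersal.mono {B : Finset V} (hB : IsNullVersal E e B) (hBS : B ⊆ S)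
    (hS : S ⊆ eᶜ) : IsNullVersal E e S :=
  ⟨hS, fun f hf hfe => (hB.2 f hf hfe).mono (inter_subset_inter_right hBS)⟩

theorem IsNullVersal.eq {f : Finset V} (he : e ∈ E) (hSe : IsNullVersal E e S)
    (hSf : IsNullVersal E f S) : e = f := by
  by_contra hef
  obtain ⟨x, hx⟩ := hSf.2 e he hef
  exact mem_compl.1 (hSe.1 (mem_inter.1 hx).1) (mem_inter.1 hx).2

theorem pairwiseDisjoint_nullVersals : (E : Set (Finset V)).PairwiseDisjoint (nullVersals E) :=
  fun _ he _ _ hef => disjoint_left.2 fun _ hSe hSf =>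
    hef (IsNullVersal.eq he (mem_nullVersals.1 hSe) (mem_nullVersals.1 hSf))

theorem ncard_setOf_isNullVersal :
    {S | ∃ e ∈ E, IsNullVersal E e S}.ncard = ∑ e ∈ E, #(nullVersals E e) := by
  have : {S | ∃ e ∈ E, IsNullVersal E e S} = ↑(E.biUnion (nullVersals E)) := by
    ext S
    simp [mem_nullVersals]
  rw [this, Set.ncard_coe_finset, card_biUnion pairwiseDisjoint_nullVersals]

theorem exists_isNullVersal_card_le (he : e ∈ E) (hanti : ∀ f ∈ E, f ⊆ e → f = e) :
    ∃ B, IsNullVersal E e B ∧ #B ≤ #E - 1 := by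
  have hout : ∀ f ∈ E.erase e, ∃ x ∈ f, x ∉ e := fun f hf => by
    obtain ⟨hfe, hfE⟩ := mem_erase.1 hf
    by_contra! h
    exact hfe (hanti f hfE h)
  choose g hgf hge using hout
  refine ⟨(E.erase e).attach.image fun f => g f.1 f.2, ⟨?_, fun f hf hfe => ?_⟩, ?_⟩
  · intro x hx
    obtain ⟨⟨f, hf⟩, -, rfl⟩ := mem_image.1 hx
    exact mem_compl.2 (hge f hf)
  · have hf' : f ∈ E.erase e := mem_erase.2 ⟨hfe, hf⟩
    exact ⟨g f hf', mem_inter.2 ⟨mem_image.2 ⟨⟨f, hf'⟩, mem_attach _ _, rfl⟩, hgf f hf'⟩⟩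
  · exact card_image_le.trans (card_attach.trans (card_erase_of_mem he)).le

theorem two_pow_le_card_nullVersals (he : e ∈ E) (hanti : ∀ f ∈ E, f ⊆ e → f = e) :
    2 ^ (Fintype.card V - #e - (#E - 1)) ≤ #(nullVersals E e) := by
  obtain ⟨B, hB, hBcard⟩ := exists_isNullVersal_card_le he hanti
  have hIcc : Icc B eᶜ ⊆ nullVersals E e := fun S hS => by
    obtain ⟨hBS, hSe⟩ := mem_Icc.1 hS
    exact mem_nullVersals.2 (hB.mono hBS hSe)
  calc 2 ^ (Fintype.card V - #e - (#E - 1))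
      ≤ 2 ^ (#eᶜ - #B) := by
        rw [card_compl]
        exact Nat.pow_le_pow_right two_pos (by omega)
    _ = #(Icc B eᶜ) := (card_Icc_finset hB.1).symm
    _ ≤ #(nullVersals E e) := card_le_card hIcc

end NullVersal

theorem add_le_mul_two_pow {m : ℕ} (hm : 1 ≤ m) (d : ℕ) : m + d ≤ m * 2 ^ d :=
  calc m + d ≤ m * (d + 1) := by nlinarith
    _ ≤ m * 2 ^ d := Nat.mul_le_mul_left m Nat.lt_two_pow_self

/-- Case II.a: if `H` is `r`-uniform with `n > 2r` vertices and `2 ≤ m ≤ n - r` edges,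
then `|Z'(H)| ≥ m · 2 ^ (n - m - r + 1) ≥ n + 1`. -/
theorem stmt_9 {V : Type*} [Fintype V] [DecidableEq V] (E : Finset (Finset V)) (r n m : ℕ)
    (hn : n = Fintype.card V) (hm : m = E.card)
    (hunif : ∀ e ∈ E, e.card = r)
    (hanti : ∀ e ∈ E, ∀ f ∈ E, e ⊆ f → e = f)
    (hn2r : 2 * r < n) (hm2 : 2 ≤ m) (hmn : m ≤ n - r) :
    m * 2 ^ (n - m - r + 1) ≤
      {S : Finset V | ∃ e ∈ E, S ⊆ eᶜ ∧ ∀ f ∈ E, f ≠ e → (S ∩ f).Nonempty}.ncard ∧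
    n + 1 ≤
      {S : Finset V | ∃ e ∈ E, S ⊆ eᶜ ∧ ∀ f ∈ E, f ≠ e → (S ∩ f).Nonempty}.ncard := by
  have hmain : m * 2 ^ (n - m - r + 1) ≤ {S | ∃ e ∈ E, IsNullVersal E e S}.ncard := by
    rw [ncard_setOf_isNullVersal, hm, ← smul_eq_mul, ← sum_const]
    refine sum_le_sum fun e he => le_trans ?_ (two_pow_le_card_nullVersals he
      fun f hf hfe => hanti f hf e he hfe)
    exact Nat.pow_le_pow_right two_pos (by rw [hunif e he]; omega)
  refine ⟨hmain, le_trans ?_ hmain⟩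
  calc n + 1 ≤ 2 * (m + (n - m - r)) := by omega
    _ ≤ 2 * (m * 2 ^ (n - m - r)) := Nat.mul_le_mul_left 2 (add_le_mul_two_pow (by omega) _)
    _ = m * 2 ^ (n - m - r + 1) := by ring
end

section
/- The r-star with m = n − r + 1 edges on n vertices has exactly 2^{r−1}(n − r + 1) versals, and for r ≥ 3 this quantity is at least n + 1. -/
/-!
Every edge of the star with core `C` is `insert v C` for a leaf `v ∉ C`, and
`|S ∩ insert v C| = |S ∩ C| + [v ∈ S]`, so comparing two edges only compares their leaves.
Hence `S` is a versal for the edge with leaf `v` exactly when `S` misses `v` and contains every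
other leaf, while `S ∩ C` is arbitrary: the versals are parametrised by a subset of the core and
a leaf, which gives `2 ^ |C| * |Cᶜ|` of them.
-/

open Finset

namespace Hypergraph

variable {V : Type*} [DecidableEq V]

def IsVersal (E : Finset (Finset V)) (e S : Finset V) : Prop :=
  ∀ f ∈ E, f ≠ e → #(S ∩ e) < #(S ∩ f)

def versals (E : Finset (Finset V)) : Set (Finset V) := {S | ∃ e ∈ E, IsVersal E e S}

lemma card_inter_insert_of_notMem {S C : Finset V} {v : V} (hv : v ∉ C) :
    #(S ∩ insert v C) = #(S ∩ C) + if v ∈ S then 1 else 0 := by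
  split_ifs with h
  · rw [inter_insert_of_mem h, card_insert_of_notMem fun h' => hv (mem_inter.1 h').2]
  · rw [inter_insert_of_notMem h, add_zero]

lemma insert_injOn_compl (C : Finset V) : Set.InjOn (insert · C) (Cᶜ : Set V) := by
  intro v hv w _ (h : insert v C = insert w C)
  have hvw : v ∈ insert w C := h ▸ mem_insert_self v C
  simpa [show v ∉ C by simpa using hv] using hvw

section Star

variable [Fintype V]

def star (C : Finset V) : Finset (Finset V) := Cᶜ.image (insert · C)

lemma card_star (C : Finset V) : #(star C) = #Cᶜ :=
  card_image_of_injOn (by simpa using insert_injOn_compl C)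

lemma eq_star {E : Finset (Finset V)} {C : Finset V} (hcore : ∀ e ∈ E, C ⊆ e)
    (hcard : ∀ e ∈ E, #e = #C + 1) (hcover : ∀ v ∉ C, ∃ e ∈ E, v ∈ e) : E = star C := by
  have hleaf : ∀ e ∈ E, ∃ v ∉ C, insert v C = e := fun e he =>
    exists_eq_insert_iff.mpr ⟨hcore e he, (hcard e he).symm⟩
  ext e
  simp only [star, mem_image, mem_compl]
  refine ⟨hleaf e, ?_⟩
  rintro ⟨v, hv, rfl⟩
  obtain ⟨e, he, hve⟩ := hcover v hv
  obtain ⟨w, -, rfl⟩ := hleaf e he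
  obtain rfl : v = w := by simpa [hv] using hve
  exact he

lemma isVersal_star_insert_iff {C S : Finset V} {v : V} (hv : v ∉ C) (hC : 1 < #Cᶜ) :
    IsVersal (star C) (insert v C) S ↔ S ∩ Cᶜ = Cᶜ.erase v := by
  have hlt : ∀ w ∉ C, #(S ∩ insert v C) < #(S ∩ insert w C) ↔ v ∉ S ∧ w ∈ S := by
    intro w hw
    rw [card_inter_insert_of_notMem hv, card_inter_insert_of_notMem hw]
    split_ifs <;> simp_all
  have hne : ∀ w ∉ C, insert w C ≠ insert v C ↔ w ≠ v := fun w hw =>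
    (insert_injOn_compl C).ne_iff (by simpa using hw) (by simpa using hv)
  obtain ⟨u, hu, huv⟩ := exists_mem_ne hC v
  rw [mem_compl] at hu
  simp only [IsVersal, star, forall_mem_image, mem_compl, Finset.ext_iff, mem_inter, mem_erase]
  constructor
  · intro h x
    have hvS : v ∉ S := ((hlt u hu).1 (h hu ((hne u hu).2 huv))).1
    constructor
    · rintro ⟨hx, hxC⟩
      exact ⟨by rintro rfl; exact hvS hx, hxC⟩
    · rintro ⟨hxv, hxC⟩
      exact ⟨((hlt x hxC).1 (h hxC ((hne x hxC).2 hxv))).2, hxC⟩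
  · intro h w hw hwv
    rw [hlt w hw]
    exact ⟨fun hvS => ((h v).1 ⟨hvS, hv⟩).1 rfl, ((h w).2 ⟨(hne w hw).1 hwv, hw⟩).1⟩

lemma union_erase_compl_inter_self {C T : Finset V} (hT : T ⊆ C) (v : V) :
    (T ∪ Cᶜ.erase v) ∩ C = T := by
  ext x; have := @hT x; simp only [mem_inter, mem_union, mem_erase, mem_compl]; tauto

lemma union_erase_compl_inter_compl {C T : Finset V} (hT : T ⊆ C) (v : V) :
    (T ∪ Cᶜ.erase v) ∩ Cᶜ = Cᶜ.erase v := by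
  ext x; have := @hT x; simp only [mem_inter, mem_union, mem_erase, mem_compl]; tauto

lemma versals_star (C : Finset V) (hC : 1 < #Cᶜ) :
    versals (star C) = ↑((C.powerset ×ˢ Cᶜ).image fun p => p.1 ∪ Cᶜ.erase p.2) := by
  ext S
  have hmem : S ∈ versals (star C) ↔ ∃ v ∉ C, S ∩ Cᶜ = Cᶜ.erase v := by
    constructor
    · rintro ⟨e, he, hS⟩
      obtain ⟨v, hv, rfl⟩ := mem_image.1 he
      exact ⟨v, mem_compl.1 hv, (isVersal_star_insert_iff (mem_compl.1 hv) hC).1 hS⟩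
    · rintro ⟨v, hv, hS⟩
      exact ⟨insert v C, mem_image_of_mem _ (mem_compl.2 hv), (isVersal_star_insert_iff hv hC).2 hS⟩
  simp only [hmem, mem_coe, mem_image, Prod.exists, mem_product, mem_powerset, mem_compl]
  constructor
  · rintro ⟨v, hv, hS⟩
    refine ⟨S ∩ C, v, ⟨inter_subset_right, hv⟩, ?_⟩
    rw [← hS, ← inter_union_distrib_left, union_compl, inter_univ]
  · rintro ⟨T, v, ⟨hT, hv⟩, rfl⟩
    exact ⟨v, hv, union_erase_compl_inter_compl hT v⟩

lemma card_versals_star (C : Finset V) (hC : 1 < #Cᶜ) :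
    (versals (star C)).ncard = 2 ^ #C * #Cᶜ := by
  rw [versals_star C hC, Set.ncard_coe_finset, card_image_of_injOn, card_product, card_powerset]
  rintro ⟨T, v⟩ hTv ⟨T', v'⟩ hTv' (h : T ∪ Cᶜ.erase v = T' ∪ Cᶜ.erase v')
  simp only [coe_product, coe_powerset, Set.mem_prod, Set.mem_preimage,
    mem_coe] at hTv hTv'
  have hT : T = T' := by
    rw [← union_erase_compl_inter_self hTv.1 v, h, union_erase_compl_inter_self hTv'.1]
  have hv : Cᶜ.erase v = Cᶜ.erase v' := by
    rw [← union_erase_compl_inter_compl hTv.1 v, h, union_erase_compl_inter_compl hTv'.1]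
  rw [hT, (erase_inj _ hTv.2).1 hv]

end Star

end Hypergraph

open Hypergraph

lemma Nat.add_add_one_le_two_pow_mul {c m : ℕ} (hc : 1 ≤ c) (hm : 2 ≤ m) :
    c + 1 + m ≤ 2 ^ c * m :=
  calc c + 1 + m ≤ (c + 1) * m := add_le_mul (by omega) hm
    _ ≤ 2 ^ c * m := Nat.mul_le_mul_right m c.lt_two_pow_self

theorem stmt_11_general {V : Type*} [Fintype V] [DecidableEq V] (E : Finset (Finset V)) (r n : ℕ)
    (hr : 1 ≤ r) (hunif : ∀ e ∈ E, e.card = r)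
    (C : Finset V) (hC : C.card = r - 1) (hcore : ∀ e ∈ E, C ⊆ e)
    (hm : E.card = n - r + 1) (hm2 : 1 < E.card)
    (hout : ∀ v ∈ Cᶜ, (E.filter (fun e => v ∈ e)).card = 1) :
    {S : Finset V | ∃ e ∈ E, ∀ f ∈ E, f ≠ e → (S ∩ e).card < (S ∩ f).card}.ncard =
        2 ^ (r - 1) * (n - r + 1) ∧
      (3 ≤ r → n + 1 ≤
        {S : Finset V | ∃ e ∈ E, ∀ f ∈ E, f ≠ e → (S ∩ e).card < (S ∩ f).card}.ncard) := by
  have hE : E = star C := eq_star hcore (fun e he => by rw [hunif e he, hC]; omega) fun v hv =>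
    filter_nonempty_iff.1 <| card_pos.1 (hout v (mem_compl.2 hv)).ge
  have hleaves : #Cᶜ = n - r + 1 := by rw [← card_star, ← hE, hm]
  have hcount : (versals E).ncard = 2 ^ (r - 1) * (n - r + 1) := by
    rw [hE, card_versals_star C (by rw [← card_star, ← hE]; exact hm2), hC, hleaves]
  refine ⟨hcount, fun hr3 => hcount ▸ ?_⟩
  calc n + 1 = r - 1 + 1 + (n - r + 1) := by omega
    _ ≤ _ := Nat.add_add_one_le_two_pow_mul (by omega) (by omega)

/-- The `r`-star with `m = n - r + 1` edges on `n` vertices has exactly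
`2 ^ (r - 1) * (n - r + 1)` versals, and for `r ≥ 3` this is at least `n + 1`. -/
theorem stmt_11 {V : Type*} [Fintype V] [DecidableEq V] (E : Finset (Finset V)) (r n : ℕ)
    (hn : n = Fintype.card V) (hr : 1 ≤ r) (hunif : ∀ e ∈ E, e.card = r)
    (C : Finset V) (hC : C.card = r - 1) (hcore : ∀ e ∈ E, C ⊆ e)
    (hm : E.card = n - r + 1) (hm2 : 1 < E.card)
    (hout : ∀ v ∈ Cᶜ, (E.filter (fun e => v ∈ e)).card = 1) :
    {S : Finset V | ∃ e ∈ E, ∀ f ∈ E, f ≠ e → (S ∩ e).card < (S ∩ f).card}.ncard =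
        2 ^ (r - 1) * (n - r + 1) ∧
      (3 ≤ r → n + 1 ≤
        {S : Finset V | ∃ e ∈ E, ∀ f ∈ E, f ≠ e → (S ∩ e).card < (S ∩ f).card}.ncard) :=
  stmt_11_general E r n hr hunif C hC hcore hm hm2 hout
end

section
/- The 2r-binary star B_m (with n = 2r vertices) has exactly n null versals, and if r > 2 it has at least n + 1 versals in total. -/
/-- The binary star on `n = 2r` vertices has exactly `n` null versals, and if `r > 2` it
has at least `n + 1` versals in total. -/
theorem stmt_18 {V : Type*} [Fintype V] [DecidableEq V] (r n : ℕ) (hr : 2 ≤ r)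
    (hn : n = Fintype.card V) (hn2 : n = 2 * r)
    (C₁ C₂ : Finset V) (h1 : C₁.card = r - 1) (h2 : C₂.card = r - 1)
    (h12 : (C₁ ∩ C₂).card = r - 2)
    (E : Finset (Finset V))
    (hE : E = ((C₁ ∪ C₂)ᶜ).image (fun v => insert v C₁) ∪
      ((C₁ ∪ C₂)ᶜ).image (fun v => insert v C₂)) :
    {S : Finset V | ∃ e ∈ E, S ⊆ eᶜ ∧
        ∀ f ∈ E, f ≠ e → (S ∩ e).card < (S ∩ f).card}.ncard = n ∧
      (2 < r → n + 1 ≤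
        {S : Finset V | ∃ e ∈ E, ∀ f ∈ E, f ≠ e → (S ∩ e).card < (S ∩ f).card}.ncard) := by
  classical
  set K : Finset V := C₁ ∪ C₂ with hKdef
  have hKcard : K.card = r := by
    have h := Finset.card_union_add_card_inter C₁ C₂
    rw [← hKdef, h1, h2, h12] at h
    omega
  have hKc : Kᶜ.card = r := by
    rw [Finset.card_compl, hKcard]
    omega
  have hs1 : (C₁ \ C₂).card = 1 := by
    have h := Finset.card_sdiff_add_card_inter C₁ C₂
    rw [h1, h12] at h; omega
  obtain ⟨c₁, hc₁⟩ := Finset.card_eq_one.mp hs1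
  have hs2 : (C₂ \ C₁).card = 1 := by
    have h := Finset.card_sdiff_add_card_inter C₂ C₁
    rw [Finset.inter_comm] at h
    rw [h2, h12] at h; omega
  obtain ⟨c₂, hc₂⟩ := Finset.card_eq_one.mp hs2
  have hc₁m : c₁ ∈ C₁ ∧ c₁ ∉ C₂ := by
    have : c₁ ∈ C₁ \ C₂ := by rw [hc₁]; exact Finset.mem_singleton_self c₁
    exact Finset.mem_sdiff.mp this
  have hc₂m : c₂ ∈ C₂ ∧ c₂ ∉ C₁ := by
    have : c₂ ∈ C₂ \ C₁ := by rw [hc₂]; exact Finset.mem_singleton_self c₂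
    exact Finset.mem_sdiff.mp this
  have hc12 : c₁ ≠ c₂ := by
    rintro rfl; exact hc₁m.2 hc₂m.1
  have hEmem : ∀ e, e ∈ E ↔ (∃ v, v ∉ K ∧ e = insert v C₁) ∨ (∃ v, v ∉ K ∧ e = insert v C₂) := by
    intro e
    rw [hE]
    simp only [Finset.mem_union, Finset.mem_image, Finset.mem_compl]
    constructor <;> rintro (⟨v, hv, he⟩ | ⟨v, hv, he⟩)
    exacts [Or.inl ⟨v, hv, he.symm⟩, Or.inr ⟨v, hv, he.symm⟩,
      Or.inl ⟨v, hv, he.symm⟩, Or.inr ⟨v, hv, he.symm⟩]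
  -- generic forward lemma: any null versal has the prescribed form
  have main : ∀ (A B : Finset V) (a b : V), A ∪ B = K → a ∈ A → a ∉ B → B \ A = {b} →
      (∀ e, e ∈ E ↔ (∃ v, v ∉ K ∧ e = insert v A) ∨ (∃ v, v ∉ K ∧ e = insert v B)) →
      ∀ S v, v ∉ K → S ⊆ (insert v A)ᶜ →
        (∀ f ∈ E, f ≠ insert v A → (S ∩ insert v A).card < (S ∩ f).card) →
        S = insert b (Kᶜ.erase v) := by
    intro A B a b hU haA haB hB hEm S v hv hsub hlt
    have hbm : b ∈ B ∧ b ∉ A := by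
      have : b ∈ B \ A := by rw [hB]; exact Finset.mem_singleton_self b
      exact Finset.mem_sdiff.mp this
    have haK : a ∈ K := by rw [← hU]; exact Finset.mem_union_left _ haA
    have hsubA : ∀ x ∈ S, x ≠ v ∧ x ∉ A := by
      intro x hx
      have := hsub hx
      rw [Finset.mem_compl, Finset.mem_insert] at this
      push_neg at this
      exact this
    have hSe : S ∩ insert v A = ∅ := by
      apply Finset.eq_empty_iff_forall_notMem.mpr
      intro x hx
      rw [Finset.mem_inter] at hx
      exact (Finset.mem_compl.mp (hsub hx.1)) hx.2
    have hlt' : ∀ f ∈ E, f ≠ insert v A → (S ∩ f).Nonempty := by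
      intro f hf hne
      have := hlt f hf hne
      rw [hSe, Finset.card_empty] at this
      exact Finset.card_pos.mp this
    have hbS : b ∈ S := by
      have hfB : insert v B ∈ E := (hEm _).mpr (Or.inr ⟨v, hv, rfl⟩)
      have hneB : insert v B ≠ insert v A := by
        intro h
        have haI : a ∈ insert v B := by
          rw [h]; exact Finset.mem_insert_of_mem haA
        rcases Finset.mem_insert.mp haI with h' | h'
        · exact hv (h' ▸ haK)
        · exact haB h'
      obtain ⟨x, hx⟩ := hlt' _ hfB hneB
      rw [Finset.mem_inter, Finset.mem_insert] at hx
      obtain ⟨hxS, hx2⟩ := hx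
      rcases hx2 with rfl | hxB
      · exact absurd rfl (hsubA _ hxS).1
      · have hxm : x ∈ B \ A := Finset.mem_sdiff.mpr ⟨hxB, (hsubA _ hxS).2⟩
        rw [hB, Finset.mem_singleton] at hxm
        exact hxm ▸ hxS
    have hKS : ∀ w, w ∉ K → w ≠ v → w ∈ S := by
      intro w hw hwv
      have hfw : insert w A ∈ E := (hEm _).mpr (Or.inl ⟨w, hw, rfl⟩)
      have hne : insert w A ≠ insert v A := by
        intro h
        have : v ∈ insert w A := by rw [h]; exact Finset.mem_insert_self v A
        rcases Finset.mem_insert.mp this with h' | h'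
        · exact hwv h'.symm
        · exact hv (by rw [← hU]; exact Finset.mem_union_left _ h')
      obtain ⟨x, hx⟩ := hlt' _ hfw hne
      rw [Finset.mem_inter, Finset.mem_insert] at hx
      rcases hx.2 with rfl | hxA
      · exact hx.1
      · exact absurd hxA (hsubA _ hx.1).2
    apply Finset.Subset.antisymm
    · intro x hx
      rcases hsubA x hx with ⟨hxv, hxA⟩
      by_cases hxB : x ∈ B
      · have hxm : x ∈ B \ A := Finset.mem_sdiff.mpr ⟨hxB, hxA⟩
        rw [hB, Finset.mem_singleton] at hxm
        rw [hxm]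
        exact Finset.mem_insert_self _ _
      · have hxK : x ∉ K := by
          rw [← hU, Finset.mem_union]
          push_neg
          exact ⟨hxA, hxB⟩
        exact Finset.mem_insert_of_mem (Finset.mem_erase.mpr ⟨hxv, Finset.mem_compl.mpr hxK⟩)
    · intro x hx
      rcases Finset.mem_insert.mp hx with rfl | hx'
      · exact hbS
      · rcases Finset.mem_erase.mp hx' with ⟨hxv, hxK⟩
        exact hKS x (Finset.mem_compl.mp hxK) hxv
  -- generic converse lemma: the prescribed sets are null versals
  have conv : ∀ (A B : Finset V) (b : V), A ∪ B = K → b ∈ B → b ∉ A →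
      (∀ e, e ∈ E ↔ (∃ v, v ∉ K ∧ e = insert v A) ∨ (∃ v, v ∉ K ∧ e = insert v B)) →
      ∀ v, v ∉ K →
      insert b (Kᶜ.erase v) ⊆ (insert v A)ᶜ ∧
      (∀ f ∈ E, f ≠ insert v A →
        ((insert b (Kᶜ.erase v)) ∩ insert v A).card < ((insert b (Kᶜ.erase v)) ∩ f).card) := by
    intro A B b hU hbB hbA hEm v hv
    have hbK : b ∈ K := by rw [← hU]; exact Finset.mem_union_right _ hbB
    have hsub : insert b (Kᶜ.erase v) ⊆ (insert v A)ᶜ := by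
      intro x hx
      rw [Finset.mem_compl, Finset.mem_insert]
      push_neg
      rcases Finset.mem_insert.mp hx with rfl | hx'
      · exact ⟨by rintro rfl; exact hv hbK, hbA⟩
      · rcases Finset.mem_erase.mp hx' with ⟨hxv, hxK⟩
        rw [Finset.mem_compl] at hxK
        exact ⟨hxv, fun h => hxK (by rw [← hU]; exact Finset.mem_union_left _ h)⟩
    refine ⟨hsub, ?_⟩
    have hSe : (insert b (Kᶜ.erase v)) ∩ insert v A = ∅ := by
      apply Finset.eq_empty_iff_forall_notMem.mpr
      intro x hx
      rw [Finset.mem_inter] at hx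
      exact (Finset.mem_compl.mp (hsub hx.1)) hx.2
    intro f hf hne
    rw [hSe, Finset.card_empty]
    apply Finset.card_pos.mpr
    rcases (hEm f).mp hf with ⟨w, hw, rfl⟩ | ⟨w, hw, rfl⟩
    · have hwv : w ≠ v := by rintro rfl; exact hne rfl
      exact ⟨w, Finset.mem_inter.mpr
        ⟨Finset.mem_insert_of_mem (Finset.mem_erase.mpr ⟨hwv, Finset.mem_compl.mpr hw⟩),
         Finset.mem_insert_self _ _⟩⟩
    · exact ⟨b, Finset.mem_inter.mpr ⟨Finset.mem_insert_self _ _, Finset.mem_insert_of_mem hbB⟩⟩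
  have hEm' : ∀ e, e ∈ E ↔ (∃ v, v ∉ K ∧ e = insert v C₂) ∨ (∃ v, v ∉ K ∧ e = insert v C₁) :=
    fun e => (hEmem e).trans or_comm
  have hU' : C₂ ∪ C₁ = K := by rw [hKdef, Finset.union_comm]
  set F : Finset (Finset V) := Kᶜ.image (fun v => insert c₂ (Kᶜ.erase v)) ∪
      Kᶜ.image (fun v => insert c₁ (Kᶜ.erase v)) with hFdef
  have hsetchar : {S : Finset V | ∃ e ∈ E, S ⊆ eᶜ ∧
      ∀ f ∈ E, f ≠ e → (S ∩ e).card < (S ∩ f).card} = ↑F := by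
    ext S
    simp only [Set.mem_setOf_eq, hFdef, Finset.coe_union, Set.mem_union, Finset.coe_image,
      Set.mem_image, Finset.mem_coe, Finset.mem_compl]
    constructor
    · rintro ⟨e, he, hsub, hlt⟩
      rcases (hEmem e).mp he with ⟨v, hv, rfl⟩ | ⟨v, hv, rfl⟩
      · exact Or.inl ⟨v, hv, (main C₁ C₂ c₁ c₂ rfl hc₁m.1 hc₁m.2 hc₂ hEmem S v hv hsub hlt).symm⟩
      · exact Or.inr ⟨v, hv, (main C₂ C₁ c₂ c₁ hU' hc₂m.1 hc₂m.2 hc₁ hEm' S v hv hsub hlt).symm⟩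
    · rintro (⟨v, hv, rfl⟩ | ⟨v, hv, rfl⟩)
      · obtain ⟨hsub, hlt⟩ := conv C₁ C₂ c₂ rfl hc₂m.1 hc₂m.2 hEmem v hv
        exact ⟨insert v C₁, (hEmem _).mpr (Or.inl ⟨v, hv, rfl⟩), hsub, hlt⟩
      · obtain ⟨hsub, hlt⟩ := conv C₂ C₁ c₁ hU' hc₁m.1 hc₁m.2 hEm' v hv
        exact ⟨insert v C₂, (hEm' _).mpr (Or.inl ⟨v, hv, rfl⟩), hsub, hlt⟩
  have hinj : ∀ b : V, b ∈ K → Set.InjOn (fun v => insert b (Kᶜ.erase v)) ↑(Kᶜ) := by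
    intro b hb v hv w hw h
    replace h : insert b (Kᶜ.erase v) = insert b (Kᶜ.erase w) := h
    by_contra hvw
    have hwm : w ∈ insert b (Kᶜ.erase v) := by
      exact Finset.mem_insert_of_mem (Finset.mem_erase.mpr ⟨Ne.symm hvw, Finset.mem_coe.mp hw⟩)
    rw [h] at hwm
    rcases Finset.mem_insert.mp hwm with rfl | hwm'
    · exact (Finset.mem_compl.mp (Finset.mem_coe.mp hw)) hb
    · exact Finset.notMem_erase w _ hwm'
  have hF1 : (Kᶜ.image (fun v => insert c₂ (Kᶜ.erase v))).card = r := by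
    rw [Finset.card_image_of_injOn (hinj c₂ (by rw [hKdef]; exact Finset.mem_union_right _ hc₂m.1)), hKc]
  have hF2 : (Kᶜ.image (fun v => insert c₁ (Kᶜ.erase v))).card = r := by
    rw [Finset.card_image_of_injOn (hinj c₁ (by rw [hKdef]; exact Finset.mem_union_left _ hc₁m.1)), hKc]
  have hdisj : Disjoint (Kᶜ.image (fun v => insert c₂ (Kᶜ.erase v)))
      (Kᶜ.image (fun v => insert c₁ (Kᶜ.erase v))) := by
    rw [Finset.disjoint_left]
    rintro S hS1 hS2
    obtain ⟨v, hv, rfl⟩ := Finset.mem_image.mp hS1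
    obtain ⟨w, hw, heq⟩ := Finset.mem_image.mp hS2
    have hc₂K : c₂ ∈ K := by rw [hKdef]; exact Finset.mem_union_right _ hc₂m.1
    have : c₂ ∈ insert c₁ (Kᶜ.erase w) := by rw [heq]; exact Finset.mem_insert_self _ _
    rcases Finset.mem_insert.mp this with h' | h'
    · exact hc12 h'.symm
    · exact (Finset.mem_compl.mp (Finset.mem_of_mem_erase h')) hc₂K
  have hFcard : F.card = n := by
    rw [hFdef, Finset.card_union_of_disjoint hdisj, hF1, hF2]
    omega
  constructor
  · rw [hsetchar, Set.ncard_coe_finset]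
    exact hFcard
  · intro hr3
    obtain ⟨u, hu⟩ : (C₁ ∩ C₂).Nonempty := Finset.card_pos.mp (by rw [h12]; omega)
    obtain ⟨hu1, hu2⟩ := Finset.mem_inter.mp hu
    have huK : u ∈ K := by rw [hKdef]; exact Finset.mem_union_left _ hu1
    obtain ⟨v, hv⟩ : (Kᶜ : Finset V).Nonempty := Finset.card_pos.mp (by rw [hKc]; omega)
    have hvK : v ∉ K := Finset.mem_compl.mp hv
    set S' : Finset V := insert u (insert c₂ (Kᶜ.erase v)) with hS'def
    obtain ⟨hsubN, _⟩ := conv C₁ C₂ c₂ rfl hc₂m.1 hc₂m.2 hEmem v hvK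
    have hS'versal : ∃ e ∈ E, ∀ f ∈ E, f ≠ e → (S' ∩ e).card < (S' ∩ f).card := by
      refine ⟨insert v C₁, (hEmem _).mpr (Or.inl ⟨v, hvK, rfl⟩), ?_⟩
      intro f hf hne
      have h0 : (insert c₂ (Kᶜ.erase v)) ∩ insert v C₁ = ∅ := by
        apply Finset.eq_empty_iff_forall_notMem.mpr
        intro x hx
        rw [Finset.mem_inter] at hx
        exact (Finset.mem_compl.mp (hsubN hx.1)) hx.2
      have hcard1 : (S' ∩ insert v C₁).card = 1 := by
        rw [hS'def, Finset.insert_inter_of_mem (Finset.mem_insert_of_mem hu1), h0]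
        simp
      rw [hcard1]
      rcases (hEmem f).mp hf with ⟨w, hw, rfl⟩ | ⟨w, hw, rfl⟩
      · have hwv : w ≠ v := by rintro rfl; exact hne rfl
        have huw : u ≠ w := by rintro rfl; exact hw huK
        have hsub2 : ({u, w} : Finset V) ⊆ S' ∩ insert w C₁ := by
          intro x hx
          rcases Finset.mem_insert.mp hx with rfl | hx'
          · exact Finset.mem_inter.mpr ⟨Finset.mem_insert_self _ _, Finset.mem_insert_of_mem hu1⟩
          · rw [Finset.mem_singleton] at hx'
            subst hx'
            exact Finset.mem_inter.mpr
              ⟨Finset.mem_insert_of_mem (Finset.mem_insert_of_mem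
                (Finset.mem_erase.mpr ⟨hwv, Finset.mem_compl.mpr hw⟩)),
               Finset.mem_insert_self _ _⟩
        calc 1 < ({u, w} : Finset V).card := by rw [Finset.card_pair huw]; norm_num
          _ ≤ _ := Finset.card_le_card hsub2
      · have huc₂ : u ≠ c₂ := by rintro rfl; exact hc₂m.2 hu1
        have hsub2 : ({u, c₂} : Finset V) ⊆ S' ∩ insert w C₂ := by
          intro x hx
          rcases Finset.mem_insert.mp hx with rfl | hx'
          · exact Finset.mem_inter.mpr ⟨Finset.mem_insert_self _ _, Finset.mem_insert_of_mem hu2⟩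
          · rw [Finset.mem_singleton] at hx'
            subst hx'
            exact Finset.mem_inter.mpr
              ⟨Finset.mem_insert_of_mem (Finset.mem_insert_self _ _),
               Finset.mem_insert_of_mem hc₂m.1⟩
        calc 1 < ({u, c₂} : Finset V).card := by rw [Finset.card_pair huc₂]; norm_num
          _ ≤ _ := Finset.card_le_card hsub2
    have hS'notF : S' ∉ F := by
      intro hSF
      have huS' : u ∈ S' := Finset.mem_insert_self _ _
      rcases Finset.mem_union.mp hSF with h | h
      · obtain ⟨w, hw, heq⟩ := Finset.mem_image.mp h
        rw [← heq] at huS'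
        rcases Finset.mem_insert.mp huS' with h' | h'
        · exact hc₂m.2 (h' ▸ hu1)
        · exact (Finset.mem_compl.mp (Finset.mem_of_mem_erase h')) huK
      · obtain ⟨w, hw, heq⟩ := Finset.mem_image.mp h
        rw [← heq] at huS'
        rcases Finset.mem_insert.mp huS' with h' | h'
        · exact hc₁m.2 (h' ▸ hu2)
        · exact (Finset.mem_compl.mp (Finset.mem_of_mem_erase h')) huK
    have hsubset : insert S' (↑F : Set (Finset V)) ⊆
        {S : Finset V | ∃ e ∈ E, ∀ f ∈ E, f ≠ e → (S ∩ e).card < (S ∩ f).card} := by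
      intro S hS
      rcases Set.mem_insert_iff.mp hS with rfl | hSF
      · exact hS'versal
      · rw [← hsetchar] at hSF
        obtain ⟨e, he, _, hlt⟩ := hSF
        exact ⟨e, he, hlt⟩
    have hcardins : (insert S' (↑F : Set (Finset V))).ncard = n + 1 := by
      rw [Set.ncard_insert_of_notMem (by simpa using hS'notF) (Set.toFinite _),
        Set.ncard_coe_finset, hFcard]
    calc n + 1 = (insert S' (↑F : Set (Finset V))).ncard := hcardins.symm
      _ ≤ _ := Set.ncard_le_ncard hsubset (Set.toFinite _)
end
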